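/- Fix d ≥ 1. Let P be a Borel probability measure on ℝ^d with density p with respect to Lebesgue measure, let Z_1, Z_2, … be i.i.d. with law P, and let y ∈ ℝ^d be a point at which p is continuous and p(y) > 0. Then for every t ≥ 0, the probability P( n^{2/d} · min_{1≤j≤n} ‖y − Z_j‖² > t ) converges, as n → ∞, to exp(−p(y) · V_d · t^{d/2}). -/

import Mathlib

/-! The event `t < n^{2/d} min_j ‖y - Z_j‖²` says that no `Z_j`, `j < n`, lies in the closed ball
`B(y, r_n)` with `r_n = √(t / n^{2/d})`; by independence its probability is
`(1 - P(B(y, r_n)))^n`. The ball has volume `V_d t^{d/2} / n`, and since `p` is continuous at `y`,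
`P(B(y, r)) = p(y) vol(B(y, r)) + o(vol(B(y, r)))` as `r → 0`. Hence `n P(B(y, r_n))` tends to
`p(y) V_d t^{d/2}`, and `(1 - c_n / n)^n → exp(-c)` when `c_n → c`. -/

open MeasureTheory

/-- `V_d = π^{d/2} / Γ(d/2 + 1)`, the volume of the Euclidean unit ball in `ℝ^d`. -/
noncomputable def ballVol (d : ℕ) : ℝ :=
  Real.pi ^ ((d : ℝ) / 2) / Real.Gamma ((d : ℝ) / 2 + 1)

open Filter Topology Metric Asymptotics ProbabilityTheory

lemma ballVol_eq_sqrt_pi_pow_div (d : ℕ) :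
    ballVol d = √Real.pi ^ d / Real.Gamma ((d : ℝ) / 2 + 1) := by
  rw [ballVol, Real.sqrt_eq_rpow, ← Real.rpow_natCast, ← Real.rpow_mul Real.pi_pos.le]
  ring_nf

lemma toReal_volume_closedBall {E : Type*} [NormedAddCommGroup E] [InnerProductSpace ℝ E]
    [FiniteDimensional ℝ E] [MeasurableSpace E] [BorelSpace E] [Nontrivial E] (x : E) {r : ℝ}
    (hr : 0 ≤ r) :
    (volume (closedBall x r)).toReal = ballVol (Module.finrank ℝ E) * r ^ Module.finrank ℝ E := by
  rw [InnerProductSpace.volume_closedBall, ENNReal.toReal_mul, ENNReal.toReal_pow,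
    ENNReal.toReal_ofReal hr, ENNReal.toReal_ofReal (by positivity), ballVol_eq_sqrt_pi_pow_div,
    mul_comm]

lemma sqrt_div_rpow_two_div_pow {t x : ℝ} (ht : 0 ≤ t) (hx : 0 ≤ x) {d : ℕ} (hd : d ≠ 0) :
    √(t / x ^ ((2 : ℝ) / d)) ^ d = t ^ ((d : ℝ) / 2) / x := by
  rw [Real.sqrt_eq_rpow, ← Real.rpow_natCast, ← Real.rpow_mul (by positivity),
    Real.div_rpow ht (by positivity), ← Real.rpow_mul hx]
  field_simp
  rw [Real.rpow_one]

lemma abs_toReal_withDensity_sub_mul_le {α : Type*} [MeasurableSpace α] {μ : Measure α}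
    {f : α → ℝ} {s : Set α} (hs : MeasurableSet s) (hμs : μ s ≠ ⊤) {c ε : ℝ} (hc : 0 ≤ c)
    (hε : 0 ≤ ε) (hf : ∀ x ∈ s, |f x - c| ≤ ε) :
    |((μ.withDensity fun x => ENNReal.ofReal (f x)) s).toReal - c * (μ s).toReal|
      ≤ ε * (μ s).toReal := by
  have upper : μ.withDensity (fun x => ENNReal.ofReal (f x)) s ≤ .ofReal (c + ε) * μ s := by
    rw [withDensity_apply _ hs, ← setLIntegral_const]
    exact setLIntegral_mono measurable_const fun x hx =>
      ENNReal.ofReal_le_ofReal (by linarith [(abs_le.1 (hf x hx)).2])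
  have lower : .ofReal (c - ε) * μ s ≤ μ.withDensity (fun x => ENNReal.ofReal (f x)) s := by
    rw [withDensity_apply _ hs, ← setLIntegral_const]
    exact setLIntegral_mono' hs fun x hx =>
      ENNReal.ofReal_le_ofReal (by linarith [(abs_le.1 (hf x hx)).1])
  have hfin : ENNReal.ofReal (c + ε) * μ s ≠ ⊤ := ENNReal.mul_ne_top ENNReal.ofReal_ne_top hμs
  have upper' := ENNReal.toReal_mono hfin upper
  have lower' := ENNReal.toReal_mono (ne_top_of_le_ne_top hfin upper) lower
  rw [ENNReal.toReal_mul, ENNReal.toReal_ofReal (by positivity)] at upper'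
  rw [ENNReal.toReal_mul, ENNReal.toReal_ofReal'] at lower'
  have : (c - ε) * (μ s).toReal ≤ max (c - ε) 0 * (μ s).toReal :=
    mul_le_mul_of_nonneg_right (le_max_left _ _) ENNReal.toReal_nonneg
  exact abs_le.2 ⟨by linarith, by linarith⟩

section

variable {E : Type*} [PseudoMetricSpace E] [ProperSpace E] [MeasurableSpace E]
  [OpensMeasurableSpace E] {μ : Measure E} [IsFiniteMeasureOnCompacts μ] {f : E → ℝ} {y : E}

lemma isLittleO_toReal_withDensity_closedBall_sub (hf : ContinuousAt f y) (hfy : 0 ≤ f y) :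
    (fun r => ((μ.withDensity fun x => ENNReal.ofReal (f x)) (closedBall y r)).toReal
        - f y * (μ (closedBall y r)).toReal) =o[𝓝 0] fun r => (μ (closedBall y r)).toReal := by
  refine isLittleO_iff.2 fun ε hε => ?_
  obtain ⟨δ, hδ, hfδ⟩ := Metric.continuousAt_iff.1 hf ε hε
  filter_upwards [Iio_mem_nhds hδ] with r hr
  rw [Real.norm_eq_abs, Real.norm_of_nonneg ENNReal.toReal_nonneg]
  refine abs_toReal_withDensity_sub_mul_le measurableSet_closedBall
    measure_closedBall_lt_top.ne hfy hε.le fun x hx => (hfδ ?_).le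
  exact (mem_closedBall.1 hx).trans_lt hr

lemma tendsto_nat_mul_toReal_withDensity_closedBall (hf : ContinuousAt f y) (hfy : 0 ≤ f y)
    {r : ℕ → ℝ} (hr : Tendsto r atTop (𝓝 0)) {K : ℝ}
    (hK : Tendsto (fun n : ℕ => n * (μ (closedBall y (r n))).toReal) atTop (𝓝 K)) :
    Tendsto (fun n : ℕ =>
        n * ((μ.withDensity fun x => ENNReal.ofReal (f x)) (closedBall y (r n))).toReal)
      atTop (𝓝 (f y * K)) := by
  have herr := ((isBigO_refl (fun n : ℕ => (n : ℝ)) atTop).mul_isLittleO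
    ((isLittleO_toReal_withDensity_closedBall_sub (μ := μ) hf hfy).comp_tendsto hr)).trans_isBigO
    (hK.isBigO_one ℝ)
  simpa [mul_sub, mul_left_comm] using (isLittleO_one_iff ℝ).1 herr |>.add (hK.const_mul (f y))

end

lemma lt_ciInf_iff_of_finite {ι α : Type*} [Finite ι] [Nonempty ι]
    [ConditionallyCompleteLinearOrder α] {f : ι → α} {a : α} :
    a < ⨅ i, f i ↔ ∀ i, a < f i := by
  refine ⟨fun h i => h.trans_le (ciInf_le (Set.finite_range f).bddBelow i), fun h => ?_⟩
  obtain ⟨i, hi⟩ := exists_eq_ciInf_of_finite (f := f)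
  exact hi ▸ h i

lemma lt_mul_iInf_sq_norm_sub_iff {E : Type*} [SeminormedAddCommGroup E] {n : ℕ} (hn : n ≠ 0)
    {C t : ℝ} (hC : 0 < C) (ht : 0 ≤ t) (y : E) (z : ℕ → E) :
    t < C * ⨅ j : Fin n, ‖y - z j‖ ^ 2 ↔ ∀ i ∈ Finset.range n, z i ∉ closedBall y √(t / C) := by
  have : Nonempty (Fin n) := ⟨⟨0, Nat.pos_of_ne_zero hn⟩⟩
  simp only [← div_lt_iff₀' hC, lt_ciInf_iff_of_finite, Fin.forall_iff, Finset.mem_range,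
    mem_closedBall, not_le, dist_eq_norm, norm_sub_rev (z _),
    Real.sqrt_lt (div_nonneg ht hC.le) (norm_nonneg _)]

lemma ProbabilityTheory.iIndepFun.measure_biInter_preimage_eq_pow {Ω ι β : Type*}
    [MeasurableSpace Ω] [MeasurableSpace β] {Pr : Measure Ω} {Z : ι → Ω → β} (hZ : iIndepFun Z Pr)
    {P : Measure β} [NeZero P] (hlaw : ∀ i, Pr.map (Z i) = P) {S : Set β} (hS : MeasurableSet S)
    (s : Finset ι) : Pr (⋂ i ∈ s, Z i ⁻¹' S) = P S ^ s.card := by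
  have hZS : ∀ i, Pr (Z i ⁻¹' S) = P S := fun i => by
    rw [← hlaw i, Measure.map_apply_of_aemeasurable
      (.of_map_ne_zero (hlaw i ▸ NeZero.ne P)) hS]
  rw [hZ.meas_biInter fun i _ => ⟨S, hS, rfl⟩, Finset.prod_congr rfl fun i _ => hZS i,
    Finset.prod_const]

lemma measure_lt_mul_iInf_sq_norm_sub {E Θ : Type*} [SeminormedAddCommGroup E]
    [MeasurableSpace E] [OpensMeasurableSpace E] [MeasurableSpace Θ] {Pr : Measure Θ}
    {Z : ℕ → Θ → E} (hZ : iIndepFun Z Pr) {P : Measure E} [IsProbabilityMeasure P]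
    (hlaw : ∀ i, Pr.map (Z i) = P) {n : ℕ} (hn : n ≠ 0) {C t : ℝ} (hC : 0 < C) (ht : 0 ≤ t)
    (y : E) :
    Pr {θ | t < C * ⨅ j : Fin n, ‖y - Z j θ‖ ^ 2} = (1 - P (closedBall y √(t / C))) ^ n := by
  have hset : {θ | t < C * ⨅ j : Fin n, ‖y - Z j θ‖ ^ 2}
      = ⋂ i ∈ Finset.range n, Z i ⁻¹' (closedBall y √(t / C))ᶜ := by
    ext θ
    simpa using lt_mul_iInf_sq_norm_sub_iff hn hC ht y fun i => Z i θ
  rw [hset, hZ.measure_biInter_preimage_eq_pow hlaw measurableSet_closedBall.compl,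
    prob_compl_eq_one_sub measurableSet_closedBall, Finset.card_range]

theorem stmt_8_general (d : ℕ) (hd : 1 ≤ d)
    (p : EuclideanSpace ℝ (Fin d) → ℝ)
    (P : Measure (EuclideanSpace ℝ (Fin d)))
    (hP : P = volume.withDensity fun y => ENNReal.ofReal (p y))
    [IsProbabilityMeasure P]
    {Θ : Type*} [MeasurableSpace Θ] (Pr : Measure Θ)
    (Z : ℕ → Θ → EuclideanSpace ℝ (Fin d))
    (hZlaw : ∀ i, Measure.map (Z i) Pr = P)
    (hZindep : ProbabilityTheory.iIndepFun Z Pr)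
    (y : EuclideanSpace ℝ (Fin d)) (hcont : ContinuousAt p y) (hpos : 0 < p y)
    (t : ℝ) (ht : 0 ≤ t) :
    Filter.Tendsto
      (fun n : ℕ =>
        Pr {θ | t < (n : ℝ) ^ ((2 : ℝ) / d) * ⨅ j : Fin n, ‖y - Z j θ‖ ^ 2})
      Filter.atTop
      (nhds (ENNReal.ofReal (Real.exp (-(p y * ballVol d * t ^ ((d : ℝ) / 2)))))) := by
  have hd0 : d ≠ 0 := by omega
  have : Nontrivial (EuclideanSpace ℝ (Fin d)) := by
    have : Nonempty (Fin d) := ⟨⟨0, hd⟩⟩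
    infer_instance
  set r : ℕ → ℝ := fun n => √(t / (n : ℝ) ^ ((2 : ℝ) / d))
  have hr : Tendsto r atTop (𝓝 0) := by
    simpa using ((tendsto_const_nhds (x := t)).div_atTop <| (tendsto_rpow_atTop
      (by positivity)).comp tendsto_natCast_atTop_atTop).sqrt
  have hvol : Tendsto (fun n : ℕ => n * (volume (closedBall y (r n))).toReal) atTop
      (𝓝 (ballVol d * t ^ ((d : ℝ) / 2))) := by
    refine tendsto_const_nhds.congr' ?_
    filter_upwards [eventually_ne_atTop 0] with n hn
    rw [toReal_volume_closedBall _ (Real.sqrt_nonneg _), finrank_euclideanSpace_fin,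
      sqrt_div_rpow_two_div_pow ht n.cast_nonneg hd0]
    field_simp
  have hball := tendsto_nat_mul_toReal_withDensity_closedBall hcont hpos.le hr hvol
  rw [← hP, ← mul_assoc] at hball
  refine (ENNReal.tendsto_ofReal (Real.tendsto_one_add_pow_exp_of_tendsto
    (g := fun n => -(P (closedBall y (r n))).toReal) (by simpa using hball.neg))).congr' ?_
  filter_upwards [eventually_ne_atTop 0] with n hn
  have hprob : 0 ≤ 1 - (P (closedBall y (r n))).toReal := sub_nonneg.2 measureReal_le_one
  rw [measure_lt_mul_iInf_sq_norm_sub hZindep hZlaw hn (by positivity) ht, ← sub_eq_add_neg,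
    ENNReal.ofReal_pow hprob, ENNReal.ofReal_sub _ ENNReal.toReal_nonneg, ENNReal.ofReal_one,
    ENNReal.ofReal_toReal (measure_ne_top _ _)]

/-- **Limiting tail distribution of the rescaled nearest-neighbor squared distance.**
Let `P = p · Leb` on `ℝ^d`, let `Z_1, Z_2, …` be i.i.d. with law `P`, and let `y` be a
point where `p` is continuous and positive. Then for every `t ≥ 0`,
`P(n^{2/d} min_{1≤j≤n} ‖y − Z_j‖² > t) → exp(−p(y) V_d t^{d/2})` as `n → ∞`. -/
theorem stmt_8 (d : ℕ) (hd : 1 ≤ d)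
    (p : EuclideanSpace ℝ (Fin d) → ℝ) (hp : 0 ≤ p)
    (P : Measure (EuclideanSpace ℝ (Fin d)))
    (hP : P = volume.withDensity fun y => ENNReal.ofReal (p y))
    [IsProbabilityMeasure P]
    {Θ : Type*} [MeasurableSpace Θ] (Pr : Measure Θ) [IsProbabilityMeasure Pr]
    (Z : ℕ → Θ → EuclideanSpace ℝ (Fin d))
    (hZmeas : ∀ i, Measurable (Z i))
    (hZlaw : ∀ i, Measure.map (Z i) Pr = P)
    (hZindep : ProbabilityTheory.iIndepFun Z Pr)
    (y : EuclideanSpace ℝ (Fin d)) (hcont : ContinuousAt p y) (hpos : 0 < p y)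
    (t : ℝ) (ht : 0 ≤ t) :
    Filter.Tendsto
      (fun n : ℕ =>
        Pr {θ | t < (n : ℝ) ^ ((2 : ℝ) / d) * ⨅ j : Fin n, ‖y - Z j θ‖ ^ 2})
      Filter.atTop
      (nhds (ENNReal.ofReal (Real.exp (-(p y * ballVol d * t ^ ((d : ℝ) / 2)))))) :=
  stmt_8_general d hd p P hP Pr Z hZlaw hZindep y hcont hpos t ht
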